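/- (Symmetry of rNMI under the permutation model.) Let X be a finite set and let C and T be partitions of X with H(C) > 0 and H(T) > 0. Define NMI(A, B) = I(A, B)/√(H(A)·H(B)) and rNMI(A, B) = NMI(A, B) − E_{A′~perm(A)}[NMI(A′, B)]. Then rNMI(C, T) = rNMI(T, C). -/
import Mathlib


open Finset Real

variable {X : Type*} [Fintype X] [DecidableEq X]

/-- A finite family of finsets of `X` is a partition of `X` if its blocks are
nonempty, pairwise disjoint, and cover `X`. -/
def IsPartition (P : Finset (Finset X)) : Prop :=
  (∀ B ∈ P, B.Nonempty) ∧
  (∀ B ∈ P, ∀ D ∈ P, B ≠ D → Disjoint B D) ∧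
  (∀ x : X, ∃ B ∈ P, x ∈ B)

instance : DecidablePred (IsPartition (X := X)) := fun _ => by
  unfold IsPartition; infer_instance

/-- The shape of a partition: the multiset of its block sizes. -/
def shape (P : Finset (Finset X)) : Multiset ℕ := P.val.map Finset.card

/-- The image `σ·P` of a partition under a permutation `σ` of `X`. -/
def pmap (σ : X ≃ X) (P : Finset (Finset X)) : Finset (Finset X) :=
  P.image (fun B => B.image σ)

/-- Entropy of a partition: `H(C) = -∑_{B ∈ C} (|B|/N) log (|B|/N)`. -/
noncomputable def entropy (C : Finset (Finset X)) : ℝ :=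
  -∑ B ∈ C, ((B.card : ℝ) / (Fintype.card X : ℝ)) *
    Real.log ((B.card : ℝ) / (Fintype.card X : ℝ))

/-- Mutual information of two partitions:
`I(C,T) = ∑_{B ∈ C} ∑_{D ∈ T} (|B∩D|/N) log (N |B∩D| / (|B| |D|))`
(summands with `B ∩ D = ∅` vanish since the first factor is `0`). -/
noncomputable def MI (C T : Finset (Finset X)) : ℝ :=
  ∑ B ∈ C, ∑ D ∈ T, (((B ∩ D).card : ℝ) / (Fintype.card X : ℝ)) *
    Real.log ((Fintype.card X : ℝ) * ((B ∩ D).card : ℝ) / ((B.card : ℝ) * (D.card : ℝ)))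

/-- The permutation random model `perm(C)`: all partitions of `X` with the same
shape as `C`. -/
def permModel (C : Finset (Finset X)) : Finset (Finset (Finset X)) :=
  Finset.univ.filter (fun P => IsPartition P ∧ shape P = shape C)

/-- The all-partitions random model `all(X)`: all partitions of `X`. -/
def allModel (X : Type*) [Fintype X] [DecidableEq X] : Finset (Finset (Finset X)) :=
  Finset.univ.filter (fun P => IsPartition P)

/-- Uniform average of `f` over a finite set `s`. -/
noncomputable def avg {α : Type*} (s : Finset α) (f : α → ℝ) : ℝ :=
  (∑ a ∈ s, f a) / s.card

/-- Normalized mutual information. -/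
noncomputable def NMI (A B : Finset (Finset X)) : ℝ :=
  MI A B / Real.sqrt (entropy A * entropy B)

/-- Relative normalized mutual information (permutation model). -/
noncomputable def rNMI (A B : Finset (Finset X)) : ℝ :=
  NMI A B - avg (permModel A) (fun A' => NMI A' B)

/-- Renormalized relative normalized mutual information. -/
noncomputable def rrNMI (A B : Finset (Finset X)) : ℝ :=
  rNMI A B / rNMI B B

/-- Corrected normalized mutual information. -/
noncomputable def cNMI (C T : Finset (Finset X)) : ℝ :=
  (rNMI C T + rNMI T C) / (rNMI C C + rNMI T T)

/-! ### Auxiliary lemmas -/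

lemma aux_image_injective (σ : X ≃ X) :
    Function.Injective (fun B : Finset X => B.image σ) :=
  Finset.image_injective σ.injective

lemma aux_card_image (σ : X ≃ X) (B : Finset X) : (B.image σ).card = B.card :=
  Finset.card_image_of_injective _ σ.injective

lemma pmap_pmap (σ τ : X ≃ X) (P : Finset (Finset X)) :
    pmap σ (pmap τ P) = pmap (τ.trans σ) P := by
  unfold pmap
  rw [Finset.image_image]
  refine Finset.image_congr ?_
  intro B _
  simp [Finset.image_image, Function.comp]

lemma pmap_refl (P : Finset (Finset X)) : pmap (Equiv.refl X) P = P := by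
  unfold pmap
  simp

lemma pmap_symm_pmap (σ : X ≃ X) (P : Finset (Finset X)) :
    pmap σ (pmap σ.symm P) = P := by
  rw [pmap_pmap]
  simp [pmap_refl]

lemma shape_pmap (σ : X ≃ X) (P : Finset (Finset X)) :
    shape (pmap σ P) = shape P := by
  unfold shape pmap
  rw [Finset.image_val_of_injOn ((aux_image_injective σ).injOn)]
  rw [Multiset.map_map]
  exact Multiset.map_congr rfl (fun B _ => aux_card_image σ B)

lemma isPartition_pmap (σ : X ≃ X) {P : Finset (Finset X)} (hP : IsPartition P) :
    IsPartition (pmap σ P) := by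
  obtain ⟨h1, h2, h3⟩ := hP
  refine ⟨?_, ?_, ?_⟩
  · intro B hB
    obtain ⟨B', hB', rfl⟩ := Finset.mem_image.mp hB
    exact (h1 B' hB').image σ
  · intro B hB D hD hne
    obtain ⟨B', hB', rfl⟩ := Finset.mem_image.mp hB
    obtain ⟨D', hD', rfl⟩ := Finset.mem_image.mp hD
    have hne' : B' ≠ D' := fun h => hne (by rw [h])
    exact Finset.disjoint_image σ.injective |>.mpr (h2 B' hB' D' hD' hne')
  · intro x
    obtain ⟨B, hB, hx⟩ := h3 (σ.symm x)
    exact ⟨B.image σ, Finset.mem_image_of_mem _ hB,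
      by simpa using Finset.mem_image_of_mem σ hx⟩

lemma entropy_pmap (σ : X ≃ X) (P : Finset (Finset X)) :
    entropy (pmap σ P) = entropy P := by
  unfold entropy pmap
  rw [Finset.sum_image (fun B _ D _ h => aux_image_injective σ h)]
  congr 1
  exact Finset.sum_congr rfl (fun B _ => by rw [aux_card_image])

lemma MI_pmap (σ : X ≃ X) (A B : Finset (Finset X)) :
    MI (pmap σ A) (pmap σ B) = MI A B := by
  unfold MI pmap
  rw [Finset.sum_image (fun B _ D _ h => aux_image_injective σ h)]
  refine Finset.sum_congr rfl (fun B' _ => ?_)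
  rw [Finset.sum_image (fun B _ D _ h => aux_image_injective σ h)]
  refine Finset.sum_congr rfl (fun D' _ => ?_)
  rw [← Finset.image_inter _ _ σ.injective, aux_card_image, aux_card_image,
    aux_card_image]

lemma MI_comm (A B : Finset (Finset X)) : MI A B = MI B A := by
  unfold MI
  rw [Finset.sum_comm]
  refine Finset.sum_congr rfl (fun D _ => Finset.sum_congr rfl (fun B _ => ?_))
  rw [Finset.inter_comm, mul_comm (B.card : ℝ)]

lemma NMI_comm (A B : Finset (Finset X)) : NMI A B = NMI B A := by
  unfold NMI
  rw [MI_comm, mul_comm]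

lemma NMI_pmap (σ : X ≃ X) (A B : Finset (Finset X)) :
    NMI (pmap σ A) (pmap σ B) = NMI A B := by
  unfold NMI
  rw [MI_pmap, entropy_pmap, entropy_pmap]

lemma NMI_pmap_left (σ : X ≃ X) (A B : Finset (Finset X)) :
    NMI (pmap σ A) B = NMI A (pmap σ.symm B) := by
  conv_lhs => rw [← pmap_symm_pmap σ B]
  rw [NMI_pmap]

/-- From equal shapes, a card-preserving bijection between the block sets. -/
lemma exists_card_bij :
    ∀ (s t : Finset (Finset X)), s.val.map Finset.card = t.val.map Finset.card →
    ∃ f : Finset X → Finset X,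
      Set.BijOn f s t ∧ ∀ B ∈ s, (f B).card = B.card := by
  intro s
  induction s using Finset.induction_on with
  | empty =>
    intro t h
    have : t = ∅ := by
      rw [← Finset.card_eq_zero]
      have := congrArg Multiset.card h
      simpa using this.symm
    subst this
    exact ⟨id, ⟨by simp [Set.MapsTo], by simp [Set.InjOn], by simp [Set.SurjOn]⟩,
      by simp⟩
  | @insert a s ha ih =>
    intro t h
    have hval : (insert a s).val = a ::ₘ s.val := Finset.insert_val_of_notMem ha
    rw [hval, Multiset.map_cons] at h
    have hmem : a.card ∈ t.val.map Finset.card := by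
      rw [← h]; exact Multiset.mem_cons_self _ _
    obtain ⟨D, hD, hDcard⟩ := Multiset.mem_map.mp hmem
    have hDt : D ∈ t := hD
    have hts : (t.erase D).val.map Finset.card = s.val.map Finset.card := by
      have h2 : t.val = D ::ₘ (t.erase D).val := by
        rw [Finset.erase_val, ← Multiset.cons_erase hD]
        simp [Multiset.erase_cons_head]
      rw [h2, Multiset.map_cons, hDcard] at h
      exact (Multiset.cons_inj_right _ |>.mp h).symm
    obtain ⟨f, hf, hfcard⟩ := ih (t.erase D) hts.symm
    have hne : ∀ B ∈ s, ¬ (B = a) := fun B hB h => ha (h ▸ hB)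
    set g : Finset X → Finset X := fun B => if B = a then D else f B with hg
    have hga : g a = D := by simp [hg]
    have hgs : ∀ B ∈ s, g B = f B := fun B hB => by simp [hg, hne B hB]
    refine ⟨g, ⟨?_, ?_, ?_⟩, ?_⟩
    · intro B hB
      simp only [Finset.coe_insert, Set.mem_insert_iff, Finset.mem_coe] at hB
      rcases hB with rfl | hB
      · rw [hga]; simpa using hDt
      · rw [hgs B hB]
        exact Finset.mem_of_mem_erase (hf.mapsTo hB)
    · intro B hB B' hB' hBB'
      simp only [Finset.coe_insert, Set.mem_insert_iff, Finset.mem_coe] at hB hB'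
      rcases hB with rfl | hB <;> rcases hB' with rfl | hB'
      · rfl
      · exfalso
        rw [hga, hgs B' hB'] at hBB'
        exact Finset.notMem_erase D t (hBB' ▸ hf.mapsTo hB')
      · exfalso
        rw [hga, hgs B hB] at hBB'
        exact Finset.notMem_erase D t (hBB'.symm ▸ hf.mapsTo hB)
      · rw [hgs B hB, hgs B' hB'] at hBB'
        exact hf.injOn hB hB' hBB'
    · intro D' hD'
      simp only [Finset.mem_coe] at hD'
      by_cases hDD : D' = D
      · exact ⟨a, by simp, by rw [hga, hDD]⟩
      · obtain ⟨B, hB, hfB⟩ := hf.surjOn (Finset.mem_coe.mpr (Finset.mem_erase.mpr ⟨hDD, hD'⟩))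
        simp only [Finset.mem_coe] at hB
        exact ⟨B, by simp [hB], by rw [hgs B hB]; exact hfB⟩
    · intro B hB
      rcases Finset.mem_insert.mp hB with rfl | hB
      · rw [hga, hDcard]
      · rw [hgs B hB]
        exact hfcard B hB

/-- Unique block containing `x`. -/
lemma existsUnique_block {P : Finset (Finset X)} (hP : IsPartition P) (x : X) :
    ∃! B, B ∈ P ∧ x ∈ B := by
  obtain ⟨B, hB, hx⟩ := hP.2.2 x
  refine ⟨B, ⟨hB, hx⟩, ?_⟩
  rintro D ⟨hD, hxD⟩
  by_contra hne
  exact (hP.2.1 D hD B hB hne).forall_ne_finset hxD hx rfl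

/-- Every partition with the same shape is in the `Perm X`-orbit. -/
lemma exists_perm_of_shape_eq {P Q : Finset (Finset X)}
    (hP : IsPartition P) (hQ : IsPartition Q) (h : shape P = shape Q) :
    ∃ σ : X ≃ X, pmap σ P = Q := by
  obtain ⟨f, hf, hfcard⟩ := exists_card_bij P Q h
  -- block of x
  have hu : ∀ x : X, ∃! B, B ∈ P ∧ x ∈ B := existsUnique_block hP
  classical
  let blk : X → Finset X := fun x => P.choose (x ∈ ·) (hu x)
  have hblk_mem : ∀ x, blk x ∈ P := fun x => P.choose_mem _ (hu x)
  have hblk_self : ∀ x, x ∈ blk x := fun x => P.choose_property (x ∈ ·) (hu x)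
  have hblk_eq : ∀ {x : X} {B : Finset X}, B ∈ P → x ∈ B → blk x = B := by
    intro x B hB hx
    exact ((hu x).unique ⟨hblk_mem x, hblk_self x⟩ ⟨hB, hx⟩)
  -- per block equiv, keyed on the block (totalized so it depends only on `B`)
  let f' : Finset X → Finset X := fun B => if B ∈ P then f B else B
  have hf'card : ∀ B : Finset X, (f' B).card = B.card := by
    intro B
    by_cases hB : B ∈ P
    · simp only [f', if_pos hB]; exact hfcard B hB
    · simp [f', hB]
  have hf'eq : ∀ B ∈ P, f' B = f B := fun B hB => by simp [f', hB]
  let e : ∀ B : Finset X, {y // y ∈ B} ≃ {y // y ∈ f' B} := fun B =>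
    Finset.equivOfCardEq (hf'card B).symm
  let g : X → X := fun x => (e (blk x) ⟨x, hblk_self x⟩ : X)
  have hg_mem : ∀ x, g x ∈ f (blk x) := fun x => by
    rw [← hf'eq _ (hblk_mem x)]
    exact (e (blk x) ⟨x, hblk_self x⟩).2
  have ecast : ∀ (B B' : Finset X) (hBB' : B = B') (x : X) (hx : x ∈ B),
      ((e B ⟨x, hx⟩ : X)) = (e B' ⟨x, hBB' ▸ hx⟩ : X) := by
    rintro B B' rfl x hx; rfl
  have hg_inj : Function.Injective g := by
    intro x y hxy
    have hbxy : blk x = blk y := by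
      by_contra hne
      have h1 : f (blk x) ≠ f (blk y) := fun h =>
        hne (hf.injOn (Finset.mem_coe.mpr (hblk_mem x)) (Finset.mem_coe.mpr (hblk_mem y)) h)
      have hd : Disjoint (f (blk x)) (f (blk y)) :=
        hQ.2.1 _ (hf.mapsTo (Finset.mem_coe.mpr (hblk_mem x)))
          _ (hf.mapsTo (Finset.mem_coe.mpr (hblk_mem y))) h1
      exact hd.forall_ne_finset (hg_mem x) (hg_mem y) (by rw [hxy])
    -- same block: e is injective
    have hxy' : (e (blk y) ⟨x, hbxy ▸ hblk_self x⟩ : X) =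
        (e (blk y) ⟨y, hblk_self y⟩ : X) := by
      rw [← ecast (blk x) (blk y) hbxy x (hblk_self x)]
      exact hxy
    have := (e (blk y)).injective (Subtype.ext hxy')
    exact congrArg Subtype.val this
  have hg_bij : Function.Bijective g := Finite.injective_iff_bijective.mp hg_inj
  refine ⟨Equiv.ofBijective g hg_bij, ?_⟩
  have hcoe : ⇑(Equiv.ofBijective g hg_bij) = g := rfl
  have himg : ∀ B ∈ P, B.image g = f B := by
    intro B hB
    have hsub : B.image g ⊆ f B := by
      intro y hy
      obtain ⟨x, hx, rfl⟩ := Finset.mem_image.mp hy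
      have := hg_mem x
      rwa [hblk_eq hB hx] at this
    refine Finset.eq_of_subset_of_card_le hsub ?_
    rw [Finset.card_image_of_injective _ hg_inj, hfcard B hB]
  apply Finset.Subset.antisymm
  · intro D hD
    obtain ⟨B, hB, rfl⟩ := Finset.mem_image.mp hD
    rw [hcoe, himg B hB]
    exact hf.mapsTo (Finset.mem_coe.mpr hB)
  · intro D hD
    obtain ⟨B, hB, hfB⟩ := hf.surjOn (Finset.mem_coe.mpr hD)
    simp only [Finset.mem_coe] at hB
    refine Finset.mem_image.mpr ⟨B, hB, ?_⟩
    rw [hcoe, himg B hB]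
    exact hfB

lemma pmap_mem_permModel (σ : X ≃ X) {P : Finset (Finset X)} (hP : IsPartition P) :
    pmap σ P ∈ permModel P := by
  rw [permModel, Finset.mem_filter]
  exact ⟨Finset.mem_univ _, isPartition_pmap σ hP, shape_pmap σ P⟩

/-- fibers of `σ ↦ pmap σ P` have constant cardinality. -/
lemma fiber_card_const {P Q : Finset (Finset X)} (σ₀ : X ≃ X) (hQ : pmap σ₀ P = Q) :
    (Finset.univ.filter (fun σ : X ≃ X => pmap σ P = Q)).card =
    (Finset.univ.filter (fun σ : X ≃ X => pmap σ P = P)).card := by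
  apply Finset.card_nbij' (fun σ => σ.trans σ₀.symm) (fun τ => τ.trans σ₀)
  · intro σ hσ
    simp only [Finset.mem_coe, Finset.mem_filter, Finset.mem_univ, true_and] at *
    rw [← pmap_pmap, hσ, ← hQ, pmap_pmap, Equiv.self_trans_symm, pmap_refl]
  · intro τ hτ
    simp only [Finset.mem_coe, Finset.mem_filter, Finset.mem_univ, true_and] at *
    rw [← pmap_pmap, hτ, hQ]
  · intro σ _
    ext x; simp
  · intro τ _
    ext x; simp

/-- Average over the permutation model equals average over all permutations. -/
lemma avg_permModel {P : Finset (Finset X)} (hP : IsPartition P)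
    (F : Finset (Finset X) → ℝ) :
    avg (permModel P) F =
    avg (Finset.univ : Finset (X ≃ X)) (fun σ => F (pmap σ P)) := by
  classical
  set k := (Finset.univ.filter (fun σ : X ≃ X => pmap σ P = P)).card with hk
  have hk_pos : 0 < k := by
    rw [hk, Finset.card_pos]
    exact ⟨Equiv.refl X, by simp [pmap_refl]⟩
  have himage : (Finset.univ : Finset (X ≃ X)).image (fun σ => pmap σ P) = permModel P := by
    apply Finset.Subset.antisymm
    · intro Q hQ
      obtain ⟨σ, _, rfl⟩ := Finset.mem_image.mp hQ
      exact pmap_mem_permModel σ hP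
    · intro Q hQ
      rw [permModel, Finset.mem_filter] at hQ
      obtain ⟨σ, hσ⟩ := exists_perm_of_shape_eq hP hQ.2.1 hQ.2.2.symm
      exact Finset.mem_image.mpr ⟨σ, Finset.mem_univ _, hσ⟩
  have hsum : ∑ σ : X ≃ X, F (pmap σ P) = ∑ Q ∈ permModel P, (k : ℝ) * F Q := by
    rw [Finset.sum_comp (fun Q => F Q) (fun σ => pmap σ P), himage]
    refine Finset.sum_congr rfl (fun Q hQ => ?_)
    rw [permModel, Finset.mem_filter] at hQ
    obtain ⟨σ₀, hσ₀⟩ := exists_perm_of_shape_eq hP hQ.2.1 hQ.2.2.symm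
    rw [fiber_card_const σ₀ hσ₀, ← hk, nsmul_eq_mul]
  have hcard : (Fintype.card (X ≃ X) : ℝ) = (k : ℝ) * (permModel P).card := by
    have : (Finset.univ : Finset (X ≃ X)).card =
        ∑ Q ∈ permModel P, (Finset.univ.filter (fun σ : X ≃ X => pmap σ P = Q)).card := by
      rw [← himage]
      exact Finset.card_eq_sum_card_image (fun σ => pmap σ P) Finset.univ
    rw [Fintype.card, this]
    push_cast
    rw [Finset.sum_congr rfl (fun Q hQ => ?_), Finset.sum_const, nsmul_eq_mul, mul_comm]
    rw [permModel, Finset.mem_filter] at hQ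
    obtain ⟨σ₀, hσ₀⟩ := exists_perm_of_shape_eq hP hQ.2.1 hQ.2.2.symm
    rw [fiber_card_const σ₀ hσ₀, ← hk]
  unfold avg
  rw [hsum, ← Finset.mul_sum, Finset.card_univ, hcard]
  rw [mul_div_mul_left _ _ (by exact_mod_cast hk_pos.ne')]

theorem stmt11 (hN : 1 ≤ Fintype.card X)
    (C T : Finset (Finset X)) (hC : IsPartition C) (hT : IsPartition T)
    (hHC : 0 < entropy C) (hHT : 0 < entropy T) :
    rNMI C T = rNMI T C := by
  unfold rNMI
  rw [NMI_comm C T]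
  congr 1
  rw [avg_permModel hC, avg_permModel hT]
  unfold avg
  congr 1
  calc ∑ σ : X ≃ X, NMI (pmap σ C) T
      = ∑ σ : X ≃ X, NMI (pmap σ.symm T) C := by
        refine Finset.sum_congr rfl (fun σ _ => ?_)
        rw [NMI_pmap_left, NMI_comm]
    _ = ∑ σ : X ≃ X, NMI (pmap σ T) C := by
        exact Finset.sum_equiv (Equiv.inv (Equiv.Perm X)) (by simp) (fun σ _ => rfl)
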